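/- Let P be a symmetric positive-definite m₁×m₁ real matrix, Q a symmetric positive-definite m₂×m₂ real matrix, Γ an m₁×m₂ real matrix, and c > 0. Set D := (P·Γ) ⊗̄ Q, E := P ⊗ Q, and Σ := (Γᵀ·P·Γ) ⊙ Q. Then D·Dᵀ + c·E and c·I_{m₂} + Σ are invertible, and for every y ∈ ℝ^{m₂}: (D·Dᵀ + c·E)⁻¹·D·y = (Γ ⊗̄ I_{m₂})·(c·I_{m₂} + Σ)⁻¹·y. -/

import Mathlib

open Matrix Kronecker

/-- The column-wise Kronecker (Khatri–Rao) product of `A : m₁×n` and `B : m₂×n`: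
the `(m₁·m₂)×n` matrix with entries `(A ⊗̄ B)[(i,s), q] = A i q * B s q`. -/
def khatriRao {R : Type*} [Mul R] {m₁ m₂ n : Type*}
    (A : Matrix m₁ n R) (B : Matrix m₂ n R) : Matrix (m₁ × m₂) n R :=
  Matrix.of fun p q => A p.1 q * B p.2 q

/-!
With `G := Γ ⊗̄ I`, the mixed-product rules for the Khatri–Rao product give `E·G = D` and
`Dᵀ·G = Σ`, hence the push-through identity `(D·Dᵀ + c·E)·G = D·(c·I + Σ)`. Both factors
`D·Dᵀ + c·E` and `c·I + Σ` are positive definite (`E` is a Kronecker product and `Σ` a Hadamard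
product of positive semidefinite matrices, by the Schur product theorem), so the identity can
be solved for `(D·Dᵀ + c·E)⁻¹·D`.
-/

section KhatriRao

variable {R : Type*} [CommSemiring R] {l₁ l₂ m₁ m₂ n n' : Type*} [Fintype m₁] [Fintype m₂]

theorem kronecker_mul_khatriRao (A : Matrix l₁ m₁ R) (B : Matrix l₂ m₂ R)
    (C : Matrix m₁ n R) (D : Matrix m₂ n R) :
    (A ⊗ₖ B) * khatriRao C D = khatriRao (A * C) (B * D) := by
  ext ⟨i, s⟩ q
  simp only [khatriRao, mul_apply, kroneckerMap_apply, of_apply, Fintype.sum_prod_type,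
    Finset.mul_sum, Finset.sum_mul]
  rw [Finset.sum_comm]
  exact Finset.sum_congr rfl fun j _ => Finset.sum_congr rfl fun t _ => by ring

theorem khatriRao_transpose_mul_khatriRao (A : Matrix m₁ n R) (B : Matrix m₂ n R)
    (C : Matrix m₁ n' R) (D : Matrix m₂ n' R) :
    (khatriRao A B)ᵀ * khatriRao C D = (Aᵀ * C) ⊙ (Bᵀ * D) := by
  ext p q
  simp only [khatriRao, mul_apply, transpose_apply, of_apply, Fintype.sum_prod_type,
    hadamard_apply, Finset.mul_sum, Finset.sum_mul]
  rw [Finset.sum_comm]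
  exact Finset.sum_congr rfl fun j _ => Finset.sum_congr rfl fun t _ => by ring

end KhatriRao

theorem Matrix.inv_mul_eq_mul_inv_of_mul_eq {R : Type*} [CommRing R] {m n : Type*}
    [Fintype m] [DecidableEq m] [Fintype n] [DecidableEq n]
    {M : Matrix m m R} {N : Matrix n n R} {D G : Matrix m n R}
    (hM : IsUnit M) (hN : IsUnit N) (h : M * G = D * N) : M⁻¹ * D = G * N⁻¹ := by
  have hMdet := (isUnit_iff_isUnit_det M).mp hM
  have hNdet := (isUnit_iff_isUnit_det N).mp hN
  calc M⁻¹ * D = M⁻¹ * (D * N) * N⁻¹ := by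
        rw [Matrix.mul_assoc, Matrix.mul_assoc, mul_nonsing_inv _ hNdet, Matrix.mul_one]
    _ = G * N⁻¹ := by rw [← h, ← Matrix.mul_assoc, nonsing_inv_mul _ hMdet, Matrix.one_mul]

/-- **Efficient closed-form KPV solution.** For symmetric positive-definite `P : m₁×m₁`
and `Q : m₂×m₂`, any `Γ : m₁×m₂` and `c > 0`, with `D := (P·Γ) ⊗̄ Q`, `E := P ⊗ Q` and
`Σ := (Γᵀ·P·Γ) ⊙ Q`, the matrices `D·Dᵀ + c·E` and `c·I + Σ` are invertible and for
every `y ∈ ℝ^{m₂}`: `(D·Dᵀ + c·E)⁻¹·D·y = (Γ ⊗̄ I)·(c·I + Σ)⁻¹·y`. -/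
theorem kpv_efficient_closed_form
    (m₁ m₂ : ℕ)
    (P : Matrix (Fin m₁) (Fin m₁) ℝ) (Q : Matrix (Fin m₂) (Fin m₂) ℝ)
    (hP : P.PosDef) (hQ : Q.PosDef)
    (Γ : Matrix (Fin m₁) (Fin m₂) ℝ) (c : ℝ) (hc : 0 < c)
    (D : Matrix (Fin m₁ × Fin m₂) (Fin m₂) ℝ) (hD : D = khatriRao (P * Γ) Q)
    (E : Matrix (Fin m₁ × Fin m₂) (Fin m₁ × Fin m₂) ℝ) (hE : E = P ⊗ₖ Q)
    (S : Matrix (Fin m₂) (Fin m₂) ℝ) (hS : S = (Γᵀ * P * Γ) ⊙ Q) :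
    IsUnit (D * Dᵀ + c • E) ∧
    IsUnit (c • (1 : Matrix (Fin m₂) (Fin m₂) ℝ) + S) ∧
    ∀ y : Fin m₂ → ℝ,
      (D * Dᵀ + c • E)⁻¹ *ᵥ (D *ᵥ y) =
        (khatriRao Γ (1 : Matrix (Fin m₂) (Fin m₂) ℝ) *
            (c • (1 : Matrix (Fin m₂) (Fin m₂) ℝ) + S)⁻¹) *ᵥ y := by
  set G : Matrix (Fin m₁ × Fin m₂) (Fin m₂) ℝ := khatriRao Γ 1
  have hEG : E * G = D := by rw [hE, kronecker_mul_khatriRao, Matrix.mul_one, hD]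
  have hDG : Dᵀ * G = S := by
    rw [hD, khatriRao_transpose_mul_khatriRao, transpose_mul,
      (isHermitian_iff_isSymm.mp hP.1).eq, (isHermitian_iff_isSymm.mp hQ.1).eq, Matrix.mul_one, hS]
  have hM : (D * Dᵀ + c • E).PosDef := by
    rw [← conjTranspose_eq_transpose_of_trivial]
    exact PosDef.posSemidef_add (posSemidef_self_mul_conjTranspose D)
      ((hE ▸ hP.kronecker hQ).smul hc)
  have hN : (c • (1 : Matrix (Fin m₂) (Fin m₂) ℝ) + S).PosDef := by
    have hΓPΓ := hP.posSemidef.conjTranspose_mul_mul_same Γ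
    rw [conjTranspose_eq_transpose_of_trivial] at hΓPΓ
    exact (PosDef.one.smul hc).add_posSemidef (hS ▸ hΓPΓ.hadamard hQ.posSemidef)
  have hpush : (D * Dᵀ + c • E) * G = D * (c • 1 + S) := by
    rw [Matrix.add_mul, Matrix.mul_assoc, hDG, Matrix.smul_mul, hEG, Matrix.mul_add,
      Matrix.mul_smul, Matrix.mul_one, add_comm]
  refine ⟨hM.isUnit, hN.isUnit, fun y => ?_⟩
  rw [mulVec_mulVec, inv_mul_eq_mul_inv_of_mul_eq hM.isUnit hN.isUnit hpush]
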